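/- arXiv:2408.01273 — 4 statements merged into one kernel-verified Lean document; each statement's English description precedes it below -/
import Mathlib

section
/- Let f : ℝⁿ × ℝ^q → ℝⁿ be continuous and locally Lipschitz in its first argument (locally uniformly in the second), let w : [0,∞) → ℝ^q be continuous, let H ∈ ℝ^{m×n} and H⁺ ∈ ℝ^{n×m} with H⁺ H = Iₙ. Suppose x : [0,T] → ℝⁿ is differentiable with x′(t) = f(x(t), w(t)) for all t ∈ [0,T], and y : [0,T] → ℝᵐ is differentiable with y′(t) = H f(H⁺ y(t), w(t)) for all t ∈ [0,T] and y(0) = H x(0). Then y(t) = H x(t) and H⁺ y(t) = x(t) for all t ∈ [0,T]. -/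
open Set

/-- Uniqueness for `ẋ = f(x, w(t))` on `[0, T]` with `f` locally Lipschitz in `x`
locally uniformly in `w`. -/
lemma aux_ode_unique {n q : ℕ}
    (f : (Fin n → ℝ) → (Fin q → ℝ) → (Fin n → ℝ))
    (hflip : ∀ (x₀ : Fin n → ℝ) (w₀ : Fin q → ℝ), ∃ ε > (0 : ℝ), ∃ K : NNReal,
      ∀ w ∈ Metric.ball w₀ ε, LipschitzOnWith K (fun x => f x w) (Metric.ball x₀ ε))
    (w : ℝ → Fin q → ℝ) (hw : ContinuousOn w (Set.Ici (0 : ℝ)))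
    (T : ℝ) (hT : 0 ≤ T)
    (x z : ℝ → Fin n → ℝ)
    (hx : ∀ t ∈ Set.Icc (0 : ℝ) T, HasDerivAt x (f (x t) (w t)) t)
    (hz : ∀ t ∈ Set.Icc (0 : ℝ) T, HasDerivAt z (f (z t) (w t)) t)
    (h0 : z 0 = x 0) : ∀ t ∈ Set.Icc (0 : ℝ) T, z t = x t := by
  -- local extension step
  have step : ∀ t₀ ∈ Set.Ico (0 : ℝ) T, z t₀ = x t₀ →
      ∃ b ∈ Set.Ioc t₀ T, Set.EqOn z x (Set.Icc t₀ b) := by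
    intro t₀ ht₀ heq
    obtain ⟨ε, hε, K, hK⟩ := hflip (x t₀) (w t₀)
    have ht₀T : t₀ ∈ Set.Icc (0 : ℝ) T := ⟨ht₀.1, ht₀.2.le⟩
    -- eventually near t₀ (within Ici t₀) all of x t, z t ∈ ball (x t₀) ε, w t ∈ ball (w t₀) ε
    have hxev : ∀ᶠ t in nhdsWithin t₀ (Set.Ici t₀), x t ∈ Metric.ball (x t₀) ε := by
      have := (hx t₀ ht₀T).continuousAt.tendsto
      exact Filter.Eventually.filter_mono nhdsWithin_le_nhds
        (this (Metric.ball_mem_nhds _ hε))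
    have hzev : ∀ᶠ t in nhdsWithin t₀ (Set.Ici t₀), z t ∈ Metric.ball (x t₀) ε := by
      have := (hz t₀ ht₀T).continuousAt.tendsto
      have : ∀ᶠ t in nhds t₀, z t ∈ Metric.ball (z t₀) ε :=
        this (Metric.ball_mem_nhds _ hε)
      rw [heq] at this
      exact Filter.Eventually.filter_mono nhdsWithin_le_nhds this
    have hwev : ∀ᶠ t in nhdsWithin t₀ (Set.Ici t₀), w t ∈ Metric.ball (w t₀) ε := by
      have hwc : ContinuousWithinAt w (Set.Ici 0) t₀ := hw t₀ ht₀.1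
      have h1 : ∀ᶠ t in nhdsWithin t₀ (Set.Ici 0), w t ∈ Metric.ball (w t₀) ε :=
        hwc (Metric.ball_mem_nhds _ hε)
      exact Filter.Eventually.filter_mono
        (nhdsWithin_mono t₀ (Set.Ici_subset_Ici.2 ht₀.1)) h1
    obtain ⟨s, hs, hsub⟩ := Filter.eventually_iff_exists_mem.1 ((hxev.and hzev).and hwev)
    obtain ⟨b₀, hb₀, hIcc⟩ := mem_nhdsGE_iff_exists_Icc_subset.1 hs
    set b : ℝ := min b₀ T with hb
    have htb : t₀ < b := lt_min hb₀ ht₀.2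
    have hbT : b ≤ T := min_le_right _ _
    have hbmem : ∀ t ∈ Set.Icc t₀ b,
        x t ∈ Metric.ball (x t₀) ε ∧ z t ∈ Metric.ball (x t₀) ε ∧
          w t ∈ Metric.ball (w t₀) ε := by
      intro t ht
      have : t ∈ Set.Icc t₀ b₀ := ⟨ht.1, ht.2.trans (min_le_left _ _)⟩
      have := hsub t (hIcc this)
      exact ⟨this.1.1, this.1.2, this.2⟩
    -- clamped time
    set c : ℝ → ℝ := fun t => max t₀ (min t b) with hc
    have hcmem : ∀ t, c t ∈ Set.Icc t₀ b := fun t =>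
      ⟨le_max_left _ _, max_le htb.le (min_le_right _ _)⟩
    have hceq : ∀ t ∈ Set.Icc t₀ b, c t = t := by
      intro t ht
      simp only [hc]
      rw [min_eq_left ht.2, max_eq_right ht.1]
    -- the vector field
    have key : Set.EqOn z x (Set.Icc t₀ b) := by
      apply ODE_solution_unique_of_mem_Icc_right
        (v := fun t u => f u (w (c t))) (s := fun _ => Metric.ball (x t₀) ε)
        (K := K) (f := z) (g := x)
      · intro t _
        exact hK _ (hbmem _ (hcmem t)).2.2
      · intro t ht
        exact ((hz t ⟨ht₀.1.trans ht.1, ht.2.trans hbT⟩).continuousAt).continuousWithinAt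
      · intro t ht
        have h1 : c t = t := hceq t (Set.mem_Icc_of_Ico ht)
        rw [h1]
        exact ((hz t ⟨ht₀.1.trans ht.1, ht.2.le.trans hbT⟩).hasDerivWithinAt)
      · intro t ht
        exact (hbmem t (Set.mem_Icc_of_Ico ht)).2.1
      · intro t ht
        exact ((hx t ⟨ht₀.1.trans ht.1, ht.2.trans hbT⟩).continuousAt).continuousWithinAt
      · intro t ht
        have h1 : c t = t := hceq t (Set.mem_Icc_of_Ico ht)
        rw [h1]
        exact ((hx t ⟨ht₀.1.trans ht.1, ht.2.le.trans hbT⟩).hasDerivWithinAt)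
      · intro t ht
        exact (hbmem t (Set.mem_Icc_of_Ico ht)).1
      · exact heq
    exact ⟨b, ⟨htb, hbT⟩, key⟩
  -- the supremum argument
  set A : Set ℝ := {t | t ∈ Set.Icc (0 : ℝ) T ∧ Set.EqOn z x (Set.Icc 0 t)} with hA
  have h0A : (0 : ℝ) ∈ A := by
    refine ⟨⟨le_rfl, hT⟩, ?_⟩
    intro s hs
    have : s = 0 := le_antisymm hs.2 hs.1
    rw [this, h0]
  have hbdd : BddAbove A := ⟨T, fun t ht => ht.1.2⟩
  have hne : A.Nonempty := ⟨0, h0A⟩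
  set τ : ℝ := sSup A with hτ
  have hτ0 : 0 ≤ τ := le_csSup hbdd h0A
  have hτT : τ ≤ T := csSup_le hne fun t ht => ht.1.2
  have hτmem : τ ∈ Set.Icc (0 : ℝ) T := ⟨hτ0, hτT⟩
  have hIco : Set.EqOn z x (Set.Ico 0 τ) := by
    intro s hs
    obtain ⟨t, htA, hst⟩ := exists_lt_of_lt_csSup hne hs.2
    exact htA.2 ⟨hs.1, hst.le⟩
  have hττ : z τ = x τ := by
    rcases eq_or_lt_of_le hτ0 with h | h
    · rw [← h, h0]
    · have hne' : (nhdsWithin τ (Set.Ico 0 τ)).NeBot := by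
        apply mem_closure_iff_nhdsWithin_neBot.1
        rw [closure_Ico (ne_of_lt h)]
        exact ⟨hτ0, le_rfl⟩
      have h1 : Filter.Tendsto z (nhdsWithin τ (Set.Ico 0 τ)) (nhds (z τ)) :=
        ((hz τ hτmem).continuousAt.continuousWithinAt).tendsto
      have h2 : Filter.Tendsto x (nhdsWithin τ (Set.Ico 0 τ)) (nhds (x τ)) :=
        ((hx τ hτmem).continuousAt.continuousWithinAt).tendsto
      have h3 : Filter.Tendsto z (nhdsWithin τ (Set.Ico 0 τ)) (nhds (x τ)) :=
        h2.congr' (Filter.eventuallyEq_of_mem self_mem_nhdsWithin fun s hs =>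
          (hIco hs).symm)
      exact tendsto_nhds_unique h1 h3
  have hτA : τ ∈ A := by
    refine ⟨hτmem, ?_⟩
    intro s hs
    rcases eq_or_lt_of_le hs.2 with h | h
    · rw [h]; exact hττ
    · exact hIco ⟨hs.1, h⟩
  have hτeqT : τ = T := by
    by_contra hne'
    have hτltT : τ < T := lt_of_le_of_ne hτT hne'
    obtain ⟨b, hb, hbeq⟩ := step τ ⟨hτ0, hτltT⟩ hττ
    have hbA : b ∈ A := by
      refine ⟨⟨hτ0.trans hb.1.le, hb.2⟩, ?_⟩
      intro s hs
      rcases le_or_gt s τ with h | h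
      · exact hτA.2 ⟨hs.1, h⟩
      · exact hbeq ⟨h.le, hs.2⟩
    have : b ≤ τ := le_csSup hbdd hbA
    exact absurd (hb.1.trans_le this) (lt_irrefl τ)
  intro t ht
  exact hτA.2 (hτeqT ▸ ht)

/-- Invariant subspace / trajectory correspondence (Proposition 3, first part):
if `x` solves `ẋ = f(x, w)` on `[0, T]`, `y` solves the lifted system
`ẏ = H f(H⁺ y, w)` on `[0, T]` with `y 0 = H (x 0)`, and `f` is continuous and
locally Lipschitz in its first argument (locally uniformly in the second),
then `y t = H (x t)` and `H⁺ (y t) = x t` on `[0, T]`. -/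
theorem lifted_trajectory_correspondence
    (n q m : ℕ)
    (f : (Fin n → ℝ) → (Fin q → ℝ) → (Fin n → ℝ))
    (hfc : Continuous (Function.uncurry f))
    (hflip : ∀ (x₀ : Fin n → ℝ) (w₀ : Fin q → ℝ), ∃ ε > (0 : ℝ), ∃ K : NNReal,
      ∀ w ∈ Metric.ball w₀ ε, LipschitzOnWith K (fun x => f x w) (Metric.ball x₀ ε))
    (w : ℝ → Fin q → ℝ) (hw : ContinuousOn w (Set.Ici (0 : ℝ)))
    (H : Matrix (Fin m) (Fin n) ℝ) (Hplus : Matrix (Fin n) (Fin m) ℝ)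
    (hHp : Hplus * H = 1)
    (T : ℝ) (hT : 0 ≤ T)
    (x : ℝ → Fin n → ℝ)
    (hx : ∀ t ∈ Set.Icc (0 : ℝ) T, HasDerivAt x (f (x t) (w t)) t)
    (y : ℝ → Fin m → ℝ)
    (hy : ∀ t ∈ Set.Icc (0 : ℝ) T,
      HasDerivAt y (H.mulVec (f (Hplus.mulVec (y t)) (w t))) t)
    (hy0 : y 0 = H.mulVec (x 0)) :
    ∀ t ∈ Set.Icc (0 : ℝ) T,
      y t = H.mulVec (x t) ∧ Hplus.mulVec (y t) = x t := by
  -- continuous linear maps given by the matrices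
  set LP : (Fin m → ℝ) →L[ℝ] (Fin n → ℝ) :=
    (Matrix.mulVecLin Hplus).toContinuousLinearMap with hLP
  set LH : (Fin n → ℝ) →L[ℝ] (Fin m → ℝ) :=
    (Matrix.mulVecLin H).toContinuousLinearMap with hLH
  have hLPapp : ∀ v, LP v = Hplus.mulVec v := fun v => rfl
  have hLHapp : ∀ v, LH v = H.mulVec v := fun v => rfl
  set z : ℝ → Fin n → ℝ := fun t => Hplus.mulVec (y t) with hzdef
  have hPH : ∀ v : Fin n → ℝ, Hplus.mulVec (H.mulVec v) = v := by
    intro v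
    rw [Matrix.mulVec_mulVec, hHp, Matrix.one_mulVec]
  have hz : ∀ t ∈ Set.Icc (0 : ℝ) T, HasDerivAt z (f (z t) (w t)) t := by
    intro t ht
    have := (LP.hasFDerivAt.comp_hasDerivAt t (hy t ht))
    have h2 : LP (H.mulVec (f (Hplus.mulVec (y t)) (w t)))
        = f (z t) (w t) := by
      rw [hLPapp, hPH]
    rw [h2] at this
    exact this
  have hz0 : z 0 = x 0 := by
    rw [hzdef]; simp only [hy0, hPH]
  have hzx : ∀ t ∈ Set.Icc (0 : ℝ) T, z t = x t :=
    aux_ode_unique f hflip w hw T hT x z hx hz hz0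
  -- now y - H x has zero derivative on [0, T]
  set g : ℝ → Fin m → ℝ := fun t => y t - H.mulVec (x t) with hgdef
  have hg : ∀ t ∈ Set.Icc (0 : ℝ) T, HasDerivAt g 0 t := by
    intro t ht
    have hHx : HasDerivAt (fun t => H.mulVec (x t)) (H.mulVec (f (x t) (w t))) t :=
      LH.hasFDerivAt.comp_hasDerivAt t (hx t ht)
    have := (hy t ht).sub hHx
    have h2 : H.mulVec (f (Hplus.mulVec (y t)) (w t)) - H.mulVec (f (x t) (w t)) = 0 := by
      rw [show Hplus.mulVec (y t) = x t from hzx t ht, sub_self]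
    rwa [h2] at this
  have hgconst : ∀ t ∈ Set.Icc (0 : ℝ) T, g t = g 0 := by
    apply constant_of_has_deriv_right_zero
    · intro t ht
      exact (hg t ht).continuousAt.continuousWithinAt
    · intro t ht
      exact (hg t ⟨ht.1, ht.2.le⟩).hasDerivWithinAt
  have hg0 : g 0 = 0 := by
    rw [hgdef]; simp [hy0]
  intro t ht
  have h1 : y t = H.mulVec (x t) := by
    have := hgconst t ht
    rw [hg0] at this
    have := sub_eq_zero.1 this
    exact this
  refine ⟨h1, ?_⟩
  rw [h1, hPH]
end

section
/- Let W ⊆ ℝ^q be a compact set, and let F : ℝⁿ × ℝ^q → ℝⁿ be continuous and locally Lipschitz in its first argument (locally uniformly in the second). Let x̲ ≤ x̄ in ℝⁿ. Suppose that for every index i ∈ {1,…,n} and every w ∈ W: (a) F_i(x, w) ≥ 0 for every x ∈ [x̲, x̄] with x_i = x̲_i, and (b) F_i(x, w) ≤ 0 for every x ∈ [x̲, x̄] with x_i = x̄_i. Then the hyperrectangle [x̲, x̄] is W-robustly forward invariant: for every continuous w : [0,∞) → W and every differentiable x : [0,∞) → ℝⁿ with x′(t) = F(x(t), w(t)) for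 all t ≥ 0 and x(0) ∈ [x̲, x̄], one has x(t) ∈ [x̲, x̄] for all t ≥ 0. -/
open Set Filter Real

/-- The function `v ↦ (max v 0)^2` is differentiable with derivative `2 * max u 0`. -/
lemma reluSq_hasDerivAt (u : ℝ) :
    HasDerivAt (fun v : ℝ => max v 0 ^ 2) (2 * max u 0) u := by
  rcases lt_trichotomy u 0 with h | h | h
  · have heq : (fun v : ℝ => max v 0 ^ 2) =ᶠ[nhds u] fun _ => (0 : ℝ) := by
      filter_upwards [Iio_mem_nhds h] with v hv
      simp [max_eq_right (le_of_lt (mem_Iio.1 hv))]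
    have h0 : HasDerivAt (fun _ : ℝ => (0 : ℝ)) 0 u := hasDerivAt_const u 0
    have := h0.congr_of_eventuallyEq heq
    simpa [max_eq_right h.le] using this
  · subst h
    rw [hasDerivAt_iff_isLittleO]
    simp only [max_self, mul_zero, smul_zero, sub_zero, zero_pow, ne_eq,
      OfNat.ofNat_ne_zero, not_false_eq_true]
    rw [Asymptotics.isLittleO_iff]
    intro c hc
    filter_upwards [Metric.ball_mem_nhds (0 : ℝ) hc] with v hv
    rw [Metric.mem_ball, Real.dist_eq, sub_zero] at hv
    rw [Real.norm_eq_abs, Real.norm_eq_abs, abs_of_nonneg (by positivity : (0:ℝ) ≤ max v 0 ^ 2)]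
    rcases le_total v 0 with h1 | h1
    · simp [max_eq_right h1]
      positivity
    · rw [max_eq_left h1, abs_of_nonneg h1]
      nlinarith [abs_nonneg v, le_abs_self v]
  · have heq : (fun v : ℝ => max v 0 ^ 2) =ᶠ[nhds u] fun v => v ^ 2 := by
      filter_upwards [Ioi_mem_nhds h] with v hv
      simp [max_eq_left (le_of_lt (mem_Ioi.1 hv))]
    have := (hasDerivAt_pow 2 u).congr_of_eventuallyEq heq
    simp only [Nat.cast_ofNat, pow_one] at this
    simpa [max_eq_left h.le] using this

/-- Clamping is 1-Lipschitz. -/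
lemma clamp_abs_le (l u a b : ℝ) :
    |max l (min a u) - max l (min b u)| ≤ |a - b| := by
  calc |max l (min a u) - max l (min b u)|
      = |max (min a u) l - max (min b u) l| := by rw [max_comm l, max_comm l]
    _ ≤ |min a u - min b u| := abs_max_sub_max_le_abs _ _ _
    _ ≤ max |a - b| |u - u| := abs_min_sub_min_le_max _ _ _ _
    _ ≤ |a - b| := by simp

lemma clamp_diff (l u a : ℝ) (h : l ≤ u) :
    max (a - u) 0 - max (l - a) 0 = a - max l (min a u) := by
  simp only [max_def, min_def]
  split_ifs <;> linarith

lemma relu_sq_add (l u a : ℝ) (h : l ≤ u) :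
    max (l - a) 0 ^ 2 + max (a - u) 0 ^ 2 = (a - max l (min a u)) ^ 2 := by
  rw [← clamp_diff l u a h]
  have hprod : max (l - a) 0 * max (a - u) 0 = 0 := by
    rcases le_total a l with h1 | h1
    · have : max (a - u) 0 = 0 := max_eq_right (by linarith)
      rw [this, mul_zero]
    · have : max (l - a) 0 = 0 := max_eq_right (by linarith)
      rw [this, zero_mul]
  nlinarith [le_max_right (l - a) (0:ℝ), le_max_right (a - u) (0:ℝ)]

/-- Invariant hyperrectangles (Proposition 1 / Nagumo-type condition):
if on each lower face the `i`-th component of the vector field is nonnegative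
and on each upper face it is nonpositive, for every disturbance in the compact
set `W`, then the hyperrectangle `[x̲, x̄]` is `W`-robustly forward invariant. -/
theorem hyperrectangle_robust_forward_invariant
    (n q : ℕ) (W : Set (Fin q → ℝ)) (hW : IsCompact W)
    (F : (Fin n → ℝ) → (Fin q → ℝ) → (Fin n → ℝ))
    (hFc : Continuous (Function.uncurry F))
    (hFlip : ∀ (x₀ : Fin n → ℝ) (w₀ : Fin q → ℝ), ∃ ε > (0 : ℝ), ∃ K : NNReal,
      ∀ w ∈ Metric.ball w₀ ε, LipschitzOnWith K (fun x => F x w) (Metric.ball x₀ ε))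
    (xl xu : Fin n → ℝ) (hle : xl ≤ xu)
    (ha : ∀ i : Fin n, ∀ w ∈ W, ∀ x : Fin n → ℝ,
      xl ≤ x → x ≤ xu → x i = xl i → 0 ≤ F x w i)
    (hb : ∀ i : Fin n, ∀ w ∈ W, ∀ x : Fin n → ℝ,
      xl ≤ x → x ≤ xu → x i = xu i → F x w i ≤ 0)
    (w : ℝ → Fin q → ℝ) (hwc : ContinuousOn w (Set.Ici (0 : ℝ)))
    (hwW : ∀ t : ℝ, 0 ≤ t → w t ∈ W)
    (x : ℝ → Fin n → ℝ)
    (hx : ∀ t : ℝ, 0 ≤ t → HasDerivAt x (F (x t) (w t)) t)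
    (hx0 : xl ≤ x 0 ∧ x 0 ≤ xu) :
    ∀ t : ℝ, 0 ≤ t → xl ≤ x t ∧ x t ≤ xu := by
  classical
  -- the squared distance to the box
  set φ : ℝ → ℝ := fun t =>
    ∑ i, (max (xl i - x t i) 0 ^ 2 + max (x t i - xu i) 0 ^ 2) with hφdef
  have hφ0 : ∀ t, 0 ≤ φ t := fun t => Finset.sum_nonneg fun i _ => by positivity
  -- continuity of φ at times t ≥ 0
  have hgc : Continuous (fun X : Fin n → ℝ =>
      ∑ i, (max (xl i - X i) 0 ^ 2 + max (X i - xu i) 0 ^ 2)) := by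
    apply continuous_finset_sum
    intro i _
    exact (((continuous_const.sub (continuous_apply i)).max continuous_const).pow 2).add
      ((((continuous_apply i).sub continuous_const).max continuous_const).pow 2)
  have hφc : ∀ t : ℝ, 0 ≤ t → ContinuousAt φ t := fun t ht =>
    hgc.continuousAt.comp (hx t ht).continuousAt
  -- derivative of φ
  set S : ℝ → ℝ := fun t => ∑ i, (2 * max (xl i - x t i) 0 * (-(F (x t) (w t) i))
      + 2 * max (x t i - xu i) 0 * (F (x t) (w t) i)) with hSdef
  have hφd : ∀ t : ℝ, 0 ≤ t → HasDerivAt φ (S t) t := by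
    intro t ht
    apply HasDerivAt.fun_sum
    intro i _
    have hxi : HasDerivAt (fun s => x s i) (F (x t) (w t) i) t := hasDerivAt_pi.1 (hx t ht) i
    have h1 : HasDerivAt (fun s => xl i - x s i) (-(F (x t) (w t) i)) t := by
      simpa using (hasDerivAt_const t (xl i)).fun_sub hxi
    have h2 : HasDerivAt (fun s => x s i - xu i) (F (x t) (w t) i) t := hxi.sub_const _
    exact ((reluSq_hasDerivAt _).comp t h1).add ((reluSq_hasDerivAt _).comp t h2)
  -- φ t = 0 iff x t in box
  have hzero : ∀ t, xl ≤ x t → x t ≤ xu → φ t = 0 := by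
    intro t h1 h2
    apply Finset.sum_eq_zero
    intro i _
    rw [max_eq_right (sub_nonpos.2 (h1 i)), max_eq_right (sub_nonpos.2 (h2 i))]
    ring
  have hrec : ∀ t, φ t = 0 → xl ≤ x t ∧ x t ≤ xu := by
    intro t ht
    have hall := (Finset.sum_eq_zero_iff_of_nonneg (fun i _ => by positivity)).1 ht
    constructor <;> intro i <;> [skip; skip] <;>
    · have h := hall i (Finset.mem_univ i)
      have h1 : max (xl i - x t i) 0 ≤ 0 ∧ max (x t i - xu i) 0 ≤ 0 := by
        constructor <;> nlinarith [le_max_right (xl i - x t i) (0:ℝ),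
          le_max_right (x t i - xu i) (0:ℝ)]
      have h2 := le_trans (le_max_left (xl i - x t i) 0) h1.1
      have h3 := le_trans (le_max_left (x t i - xu i) 0) h1.2
      first
      | (show xl i ≤ x t i; linarith)
      | (show x t i ≤ xu i; linarith)
  -- the main continuous-induction argument
  have main : ∀ T : ℝ, 0 ≤ T → ∀ t ∈ Icc (0:ℝ) T, φ t = 0 := by
    intro T hT
    have hcontT : ∀ T' : ℝ, ContinuousOn φ (Icc 0 T') := fun T' t ht =>
      (hφc t ht.1).continuousWithinAt
    have hsub : Icc (0:ℝ) T ⊆ {t | φ t = 0} := by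
      apply IsClosed.Icc_subset_of_forall_exists_gt
      · have := (hcontT T).preimage_isClosed_of_isClosed isClosed_Icc
          (isClosed_singleton (x := (0:ℝ)))
        convert this using 1
        ext t
        simp only [mem_inter_iff, mem_setOf_eq, mem_preimage, mem_singleton_iff, and_comm]
      · exact hzero 0 hx0.1 hx0.2
      · rintro c ⟨hφc0, hc0, hcT⟩ z hz
        rw [mem_setOf_eq] at hφc0
        obtain ⟨hxl, hxu⟩ := hrec c hφc0
        obtain ⟨ε, hε, K, hK⟩ := hFlip (x c) (w c)
        -- a right-neighborhood where x and w stay in the respective balls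
        have h1 : ContinuousWithinAt x (Ici c) c := (hx c hc0).continuousAt.continuousWithinAt
        have h2 : ContinuousWithinAt w (Ici c) c := (hwc c hc0).mono (Ici_subset_Ici.2 hc0)
        have hev : {t : ℝ | x t ∈ Metric.ball (x c) ε ∧ w t ∈ Metric.ball (w c) ε}
            ∈ nhdsWithin c (Ici c) := by
          filter_upwards [h1 (Metric.ball_mem_nhds (x c) hε),
            h2 (Metric.ball_mem_nhds (w c) hε)] with t ht1 ht2
          exact ⟨ht1, ht2⟩
        obtain ⟨δ, hδ, hball⟩ := Metric.mem_nhdsWithin_iff.1 hev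
        set d : ℝ := min (c + δ/2) z with hddef
        have hcd : c < d := lt_min (by linarith) hz
        have hmem : ∀ t ∈ Icc c d, x t ∈ Metric.ball (x c) ε ∧ w t ∈ Metric.ball (w c) ε := by
          intro t ht
          apply hball
          refine ⟨?_, ht.1⟩
          rw [Metric.mem_ball, Real.dist_eq, abs_of_nonneg (sub_nonneg.2 ht.1)]
          have := ht.2
          have := min_le_left (c + δ/2) z
          linarith
        -- the clamped trajectory
        set Y : ℝ → Fin n → ℝ := fun t i => max (xl i) (min (x t i) (xu i)) with hYdef
        have hYbox : ∀ t, xl ≤ Y t ∧ Y t ≤ xu := by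
          intro t
          constructor <;> intro i
          · exact le_max_left _ _
          · exact max_le (hle i) (min_le_right _ _)
        have hYc : Y c = x c := by
          funext i
          simp only [hYdef]
          rw [min_eq_left (hxu i), max_eq_right (hxl i)]
        have hYball : ∀ t ∈ Icc c d, Y t ∈ Metric.ball (x c) ε := by
          intro t ht
          rw [Metric.mem_ball]
          have hpt : dist (Y t) (x c) ≤ dist (x t) (x c) := by
            apply dist_pi_le_iff dist_nonneg |>.2
            intro i
            calc dist (Y t i) (x c i) = |max (xl i) (min (x t i) (xu i))
                  - max (xl i) (min (x c i) (xu i))| := by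
                  rw [Real.dist_eq]; congr 2
                  rw [min_eq_left (hxu i), max_eq_right (hxl i)]
              _ ≤ |x t i - x c i| := clamp_abs_le _ _ _ _
              _ = dist (x t i) (x c i) := (Real.dist_eq _ _).symm
              _ ≤ dist (x t) (x c) := dist_le_pi_dist _ _ i
          exact lt_of_le_of_lt hpt (Metric.mem_ball.1 (hmem t ht).1)
        -- φ t = ∑ (x t i - Y t i)^2
        have hφY : ∀ t, φ t = ∑ i, (x t i - Y t i) ^ 2 := by
          intro t
          apply Finset.sum_congr rfl
          intro i _
          exact relu_sq_add (xl i) (xu i) (x t i) (hle i)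
        have hdle : ∀ t, ∀ i, |x t i - Y t i| ≤ Real.sqrt (φ t) := by
          intro t i
          rw [← Real.sqrt_sq_eq_abs]
          apply Real.sqrt_le_sqrt
          rw [hφY t]
          exact Finset.single_le_sum (f := fun j => (x t j - Y t j) ^ 2)
            (fun j _ => sq_nonneg _) (Finset.mem_univ i)
        -- the Gronwall bound
        set C : ℝ := 2 * n * K with hCdef
        have hbound : ∀ t ∈ Ico c d, S t ≤ C * φ t + 0 := by
          intro t ht
          have ht' : t ∈ Icc c d := ⟨ht.1, ht.2.le⟩
          have ht0 : (0:ℝ) ≤ t := hc0.trans ht.1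
          have hwt : w t ∈ W := hwW t ht0
          have hlip := hK (w t) (hmem t ht').2
          have hFd : dist (F (x t) (w t)) (F (Y t) (w t)) ≤ K * dist (x t) (Y t) :=
            hlip.dist_le_mul _ (hmem t ht').1 _ (hYball t ht')
          have hdistY : dist (x t) (Y t) ≤ Real.sqrt (φ t) := by
            apply dist_pi_le_iff (Real.sqrt_nonneg _) |>.2
            intro i
            rw [Real.dist_eq]
            exact hdle t i
          rw [add_zero]
          have hterm : ∀ i : Fin n, 2 * max (xl i - x t i) 0 * (-(F (x t) (w t) i))
              + 2 * max (x t i - xu i) 0 * (F (x t) (w t) i) ≤ 2 * K * φ t := by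
            intro i
            have hid : max (x t i - xu i) 0 - max (xl i - x t i) 0 = x t i - Y t i :=
              clamp_diff (xl i) (xu i) (x t i) (hle i)
            have hsign : (x t i - Y t i) * F (Y t) (w t) i ≤ 0 := by
              rcases lt_trichotomy (x t i) (xl i) with h1 | h1 | h1
              · have hYi : Y t i = xl i := by
                  simp only [hYdef]
                  rw [min_eq_left (h1.le.trans (hle i)), max_eq_left h1.le]
                have := ha i (w t) hwt (Y t) (hYbox t).1 (hYbox t).2 hYi
                apply mul_nonpos_of_nonpos_of_nonneg _ this
                rw [hYi]; linarith
              · have hYi : Y t i = x t i := by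
                  simp only [hYdef]
                  rw [min_eq_left (h1 ▸ hle i), max_eq_right h1.ge]
                rw [hYi]; simp
              · rcases le_or_gt (x t i) (xu i) with h2 | h2
                · have hYi : Y t i = x t i := by
                    simp only [hYdef]
                    rw [min_eq_left h2, max_eq_right h1.le]
                  rw [hYi]; simp
                · have hYi : Y t i = xu i := by
                    simp only [hYdef]
                    rw [min_eq_right h2.le, max_eq_right (hle i)]
                  have := hb i (w t) hwt (Y t) (hYbox t).1 (hYbox t).2 hYi
                  apply mul_nonpos_of_nonneg_of_nonpos _ this
                  rw [hYi]; linarith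
            have hcomp : |F (x t) (w t) i - F (Y t) (w t) i| ≤ K * Real.sqrt (φ t) := by
              calc |F (x t) (w t) i - F (Y t) (w t) i|
                  = dist (F (x t) (w t) i) (F (Y t) (w t) i) := (Real.dist_eq _ _).symm
                _ ≤ dist (F (x t) (w t)) (F (Y t) (w t)) := dist_le_pi_dist _ _ i
                _ ≤ K * dist (x t) (Y t) := hFd
                _ ≤ K * Real.sqrt (φ t) := by
                    apply mul_le_mul_of_nonneg_left hdistY K.coe_nonneg
            have key : 2 * (x t i - Y t i) * F (x t) (w t) i ≤ 2 * K * φ t := by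
              have h4 : (x t i - Y t i) * (F (x t) (w t) i - F (Y t) (w t) i)
                  ≤ |x t i - Y t i| * |F (x t) (w t) i - F (Y t) (w t) i| :=
                (le_abs_self _).trans_eq (abs_mul _ _)
              have h5 : |x t i - Y t i| * |F (x t) (w t) i - F (Y t) (w t) i|
                  ≤ Real.sqrt (φ t) * (K * Real.sqrt (φ t)) :=
                mul_le_mul (hdle t i) hcomp (abs_nonneg _) (Real.sqrt_nonneg _)
              have h6 : Real.sqrt (φ t) * Real.sqrt (φ t) = φ t := Real.mul_self_sqrt (hφ0 t)
              have h7 : Real.sqrt (φ t) * ((K : ℝ) * Real.sqrt (φ t))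
                  = (K : ℝ) * (Real.sqrt (φ t) * Real.sqrt (φ t)) := by ring
              rw [h6] at h7
              nlinarith [hsign, h4, h5, h7]
            calc 2 * max (xl i - x t i) 0 * (-(F (x t) (w t) i))
                + 2 * max (x t i - xu i) 0 * (F (x t) (w t) i)
                = 2 * (max (x t i - xu i) 0 - max (xl i - x t i) 0) * F (x t) (w t) i := by ring
              _ = 2 * (x t i - Y t i) * F (x t) (w t) i := by rw [hid]
              _ ≤ 2 * K * φ t := key
          have hsum : S t ≤ ∑ _i : Fin n, 2 * (K : ℝ) * φ t :=
            Finset.sum_le_sum fun i _ => hterm i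
          rw [Finset.sum_const, Finset.card_univ, Fintype.card_fin, nsmul_eq_mul] at hsum
          refine hsum.trans (le_of_eq ?_)
          rw [hCdef]; ring
        -- Gronwall
        have hg := le_gronwallBound_of_liminf_deriv_right_le (f := φ) (f' := S)
          (δ := 0) (K := C) (ε := 0) (a := c) (b := d)
          (fun t ht => (hφc t (hc0.trans ht.1)).continuousWithinAt)
          (fun t ht r hr =>
            ((hφd t (hc0.trans ht.1)).hasDerivWithinAt.liminf_right_slope_le hr))
          (le_of_eq hφc0) hbound
        have hφd0 : φ d = 0 := by
          have := hg d ⟨hcd.le, le_refl d⟩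
          rw [gronwallBound_ε0, zero_mul] at this
          exact le_antisymm this (hφ0 d)
        exact ⟨d, hφd0, hcd, min_le_right _ _⟩
    intro t ht
    exact hsub ht
  intro t ht
  exact hrec t (main t ht t ⟨ht, le_refl t⟩)
end

section
/- Let W ⊆ ℝ^q be compact, let f : ℝⁿ × ℝ^q → ℝⁿ be continuous and locally Lipschitz in its first argument (locally uniformly in the second), let H ∈ ℝ^{m×n} have rank n, and let y̲ ≤ ȳ in ℝᵐ. Suppose that for every index i ∈ {1,…,m} and every w ∈ W: (a) (H f(x, w))_i ≥ 0 for every x ∈ ℝⁿ with y̲ ≤ H x ≤ ȳ and (H x)_i = y̲_i, and (b) (H f(x, w))_i ≤ 0 for every x ∈ ℝⁿ with y̲ ≤ H x ≤ ȳ and (H x)_i = ȳ_i. Then the polytope ⟨H, y̲, ȳ⟩ = {x ∈ ℝⁿ : y̲ ≤ H x ≤ ȳ} is W-robustly forward invariant: for every continuous w : [0,∞) → W and every differentiable x : [0,∞) → ℝⁿ with x′(t) = f(x(t), w(t)) for all t ≥ 0 and x(0) ∈ ⟨H, y̲, ȳ⟩, one has x(t) ∈ ⟨H, y̲, ȳ⟩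 for all t ≥ 0. -/
open Metric Set Filter Topology Asymptotics

/-- Polytope invariant sets (Theorem 1): if for each `i` the `i`-th component of
`H f(x, w)` is nonnegative on the lower face `(H x)_i = y̲_i` of the polytope and
nonpositive on the upper face `(H x)_i = ȳ_i`, for every disturbance in the compact
set `W`, then the polytope `⟨H, y̲, ȳ⟩ = {x : y̲ ≤ H x ≤ ȳ}` is `W`-robustly
forward invariant for `ẋ = f(x, w)`. -/
theorem polytope_robust_forward_invariant
    (n q m : ℕ) (W : Set (Fin q → ℝ)) (hW : IsCompact W)
    (f : (Fin n → ℝ) → (Fin q → ℝ) → (Fin n → ℝ))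
    (hfc : Continuous (Function.uncurry f))
    (hflip : ∀ (x₀ : Fin n → ℝ) (w₀ : Fin q → ℝ), ∃ ε > (0 : ℝ), ∃ K : NNReal,
      ∀ w ∈ Metric.ball w₀ ε, LipschitzOnWith K (fun x => f x w) (Metric.ball x₀ ε))
    (H : Matrix (Fin m) (Fin n) ℝ) (hH : H.rank = n)
    (yl yu : Fin m → ℝ) (hle : yl ≤ yu)
    (ha : ∀ i : Fin m, ∀ w ∈ W, ∀ x : Fin n → ℝ,
      yl ≤ H.mulVec x → H.mulVec x ≤ yu → H.mulVec x i = yl i →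
        0 ≤ H.mulVec (f x w) i)
    (hb : ∀ i : Fin m, ∀ w ∈ W, ∀ x : Fin n → ℝ,
      yl ≤ H.mulVec x → H.mulVec x ≤ yu → H.mulVec x i = yu i →
        H.mulVec (f x w) i ≤ 0)
    (w : ℝ → Fin q → ℝ) (hwc : ContinuousOn w (Set.Ici (0 : ℝ)))
    (hwW : ∀ t : ℝ, 0 ≤ t → w t ∈ W)
    (x : ℝ → Fin n → ℝ)
    (hx : ∀ t : ℝ, 0 ≤ t → HasDerivAt x (f (x t) (w t)) t)
    (hx0 : yl ≤ H.mulVec (x 0) ∧ H.mulVec (x 0) ≤ yu) :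
    ∀ t : ℝ, 0 ≤ t → yl ≤ H.mulVec (x t) ∧ H.mulVec (x t) ≤ yu := by
  classical
  set P : Set (Fin n → ℝ) := {z | yl ≤ H.mulVec z ∧ H.mulVec z ≤ yu} with hPdef
  have hcontH : Continuous fun z : Fin n → ℝ => H.mulVec z := by
    have := H.mulVecLin.continuous_of_finiteDimensional
    exact this
  have hPclosed : IsClosed P := by
    have : P = (fun z => H.mulVec z) ⁻¹' (Set.Icc yl yu) := by
      ext z; simp [hPdef, Set.mem_Icc]
    rw [this]; exact isClosed_Icc.preimage hcontH
  have hPne : P.Nonempty := ⟨x 0, hx0⟩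
  -- tangency: from a point of P one can move along f for a short positive time and stay in P
  have tangent : ∀ z ∈ P, ∀ ω ∈ W, ∀ᶠ σ in 𝓝[>] (0:ℝ), z + σ • f z ω ∈ P := by
    intro z hz ω hω
    have hall : ∀ i : Fin m, ∀ᶠ σ in 𝓝[>] (0:ℝ),
        yl i ≤ H.mulVec z i + σ * H.mulVec (f z ω) i ∧
        H.mulVec z i + σ * H.mulVec (f z ω) i ≤ yu i := by
      intro i
      set a := H.mulVec z i with hadef
      set b := H.mulVec (f z ω) i with hbdef
      have hal : yl i ≤ a := hz.1 i
      have hau : a ≤ yu i := hz.2 i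
      have htend : Tendsto (fun σ : ℝ => a + σ * b) (𝓝[>] 0) (𝓝 a) := by
        have h1 : Tendsto (fun σ : ℝ => a + σ * b) (𝓝 0) (𝓝 (a + 0 * b)) :=
          (continuous_const.add (continuous_id.mul continuous_const)).tendsto 0
        simpa using h1.mono_left nhdsWithin_le_nhds
      have hlower : ∀ᶠ σ in 𝓝[>] (0:ℝ), yl i ≤ a + σ * b := by
        rcases eq_or_lt_of_le hal with h | h
        · have hb0 : 0 ≤ b := ha i ω hω z hz.1 hz.2 h.symm
          filter_upwards [self_mem_nhdsWithin] with σ hσ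
          have : (0:ℝ) < σ := hσ
          nlinarith
        · exact (htend.eventually (eventually_gt_nhds h)).mono fun σ h' => le_of_lt h'
      have hupper : ∀ᶠ σ in 𝓝[>] (0:ℝ), a + σ * b ≤ yu i := by
        rcases eq_or_lt_of_le hau with h | h
        · have hb0 : b ≤ 0 := hb i ω hω z hz.1 hz.2 h
          filter_upwards [self_mem_nhdsWithin] with σ hσ
          have : (0:ℝ) < σ := hσ
          nlinarith
        · exact (htend.eventually (eventually_lt_nhds h)).mono fun σ h' => le_of_lt h'
      exact hlower.and hupper
    have := (Filter.eventually_all (ι := Fin m)).mpr hall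
    filter_upwards [this] with σ hσ
    constructor
    · intro i
      have := (hσ i).1
      simpa [Matrix.mulVec_add, Matrix.mulVec_smul] using this
    · intro i
      have := (hσ i).2
      simpa [Matrix.mulVec_add, Matrix.mulVec_smul] using this
  have hxcont : ∀ t : ℝ, 0 ≤ t → ContinuousAt x t := fun t ht => (hx t ht).continuousAt
  -- key local invariance extension
  have key : ∀ T : ℝ, 0 ≤ T → x T ∈ P → ∃ δ > 0, ∀ s ∈ Icc T (T + δ), x s ∈ P := by
    intro T hT hxT
    obtain ⟨ε, hε, K, hK⟩ := hflip (x T) (w T)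
    obtain ⟨δ₁, hδ₁, hδ₁'⟩ := Metric.continuousAt_iff.mp (hxcont T hT) (ε/2) (by positivity)
    obtain ⟨δ₂, hδ₂, hδ₂'⟩ := Metric.continuousWithinAt_iff.mp (hwc T hT) ε hε
    refine ⟨min δ₁ δ₂ / 2, by positivity, ?_⟩
    set δ := min δ₁ δ₂ / 2 with hδdef
    have hδ : 0 < δ := by positivity
    have hsx : ∀ s ∈ Icc T (T+δ), dist (x s) (x T) < ε/2 := by
      intro s hs
      apply hδ₁'
      rw [Real.dist_eq, abs_of_nonneg (by linarith [hs.1])]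
      have : δ < δ₁ := by
        have := min_le_left δ₁ δ₂; simp only [hδdef]; linarith
      linarith [hs.2]
    have hsw : ∀ s ∈ Icc T (T+δ), dist (w s) (w T) < ε := by
      intro s hs
      apply hδ₂' (le_trans hT hs.1)
      rw [Real.dist_eq, abs_of_nonneg (by linarith [hs.1])]
      have : δ < δ₂ := by
        have := min_le_right δ₁ δ₂; simp only [hδdef]; linarith
      linarith [hs.2]
    set φ : ℝ → ℝ := fun s => infDist (x s) P with hφdef
    have hφcont : ContinuousOn φ (Icc T (T+δ)) := by
      apply (continuous_infDist_pt P).comp_continuousOn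
      exact fun s hs => (hxcont s (le_trans hT hs.1)).continuousWithinAt
    have main : ∀ s ∈ Icc T (T+δ), φ s ≤ gronwallBound 0 (K:ℝ) 0 (s - T) := by
      apply le_gronwallBound_of_liminf_deriv_right_le (f' := fun s => (K:ℝ) * φ s) hφcont
      · -- liminf slope estimate
        intro s hs r hr
        have hs0 : (0:ℝ) ≤ s := le_trans hT hs.1
        have hsIcc : s ∈ Icc T (T+δ) := ⟨hs.1, le_of_lt hs.2⟩
        obtain ⟨xh, hxhP, hxhd⟩ := hPclosed.exists_infDist_eq_dist hPne (x s)
        have hφs : φ s = dist (x s) xh := hxhd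
        have hφle : φ s ≤ dist (x s) (x T) := infDist_le_dist_of_mem hxT
        have hxsball : x s ∈ ball (x T) ε := by
          have := hsx s hsIcc; simp only [mem_ball]; linarith
        have hxhball : xh ∈ ball (x T) ε := by
          have h1 : dist xh (x T) ≤ dist xh (x s) + dist (x s) (x T) := dist_triangle _ _ _
          have h2 : dist xh (x s) = φ s := by rw [hφs, dist_comm]
          have h3 := hsx s hsIcc
          simp only [mem_ball]
          have : φ s < ε/2 := lt_of_le_of_lt hφle h3
          linarith
        have hwball : w s ∈ ball (w T) ε := by
          simpa [mem_ball] using hsw s hsIcc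
        have hLip := hK (w s) hwball
        set v := f (x s) (w s) with hvdef
        set g := f xh (w s) with hgdef
        have hfd : dist v g ≤ (K:ℝ) * dist (x s) xh :=
          hLip.dist_le_mul _ hxsball _ hxhball
        have hlo : (fun z => x z - x s - (z - s) • v) =o[𝓝 s] fun z => z - s :=
          hasDerivAt_iff_isLittleO.mp (hx s hs0)
        set c := (r - (K:ℝ) * φ s)/2 with hcdef
        have hcpos : 0 < c := by simp only [hcdef]; linarith
        have hev1 : ∀ᶠ z in 𝓝 s, ‖x z - x s - (z - s) • v‖ ≤ c * ‖z - s‖ := hlo.def hcpos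
        have htend : Tendsto (fun z : ℝ => z - s) (𝓝[>] s) (𝓝[>] (0:ℝ)) := by
          apply tendsto_nhdsWithin_of_tendsto_nhds_of_eventually_within
          · have h1 : Tendsto (fun z : ℝ => z - s) (𝓝 s) (𝓝 (s - s)) :=
              (continuous_id.sub continuous_const).tendsto s
            simpa using h1.mono_left nhdsWithin_le_nhds
          · filter_upwards [self_mem_nhdsWithin] with z hz
            exact sub_pos.mpr (Set.mem_Ioi.mp hz)
        have hev2 : ∀ᶠ z in 𝓝[>] s, xh + (z - s) • g ∈ P :=
          htend.eventually (tangent xh hxhP (w s) (hwW s hs0))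
        apply Filter.Eventually.frequently
        filter_upwards [hev1.filter_mono nhdsWithin_le_nhds, hev2, self_mem_nhdsWithin]
          with z h1 h2 h3
        have hzs : 0 < z - s := sub_pos.mpr h3
        have hφz : φ z ≤ dist (x z) (xh + (z - s) • g) := infDist_le_dist_of_mem h2
        have hvg : ‖v - g‖ ≤ (K:ℝ) * φ s := by
          rw [← dist_eq_norm, hφs]; exact hfd
        have est : dist (x z) (xh + (z-s) • g) ≤ φ s + (z - s) * ((K:ℝ) * φ s + c) := by
          have e1 : x z - (xh + (z-s) • g)
              = (x z - x s - (z-s) • v) + ((x s - xh) + (z-s) • (v - g)) := by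
            simp only [smul_sub]; abel
          calc dist (x z) (xh + (z-s) • g) = ‖x z - (xh + (z-s) • g)‖ := dist_eq_norm _ _
            _ ≤ ‖x z - x s - (z-s) • v‖ + ‖(x s - xh) + (z-s) • (v - g)‖ := by
                rw [e1]; exact norm_add_le _ _
            _ ≤ c * ‖z - s‖ + (‖x s - xh‖ + ‖(z-s) • (v - g)‖) :=
                add_le_add h1 (norm_add_le _ _)
            _ = c * (z - s) + (φ s + (z-s) * ‖v - g‖) := by
                rw [norm_smul, Real.norm_eq_abs, abs_of_pos hzs, ← dist_eq_norm, ← hφs]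
            _ ≤ c * (z - s) + (φ s + (z-s) * ((K:ℝ) * φ s)) := by
                have := mul_le_mul_of_nonneg_left hvg (le_of_lt hzs)
                linarith
            _ = φ s + (z - s) * ((K:ℝ) * φ s + c) := by ring
        have hfinal : (z - s)⁻¹ * (φ z - φ s) ≤ (K:ℝ) * φ s + c := by
          rw [inv_mul_le_iff₀ hzs]
          have := le_trans hφz est
          linarith [mul_comm (z - s) ((K:ℝ) * φ s + c)]
        have : (K:ℝ) * φ s + c < r := by simp only [hcdef]; linarith
        linarith
      · -- initial value
        simp only [hφdef]
        rw [infDist_zero_of_mem hxT]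
      · intro s _; simp
    intro s hs
    have h1 := main s hs
    rw [gronwallBound_ε0_δ0] at h1
    have h2 : infDist (x s) P = 0 := le_antisymm h1 infDist_nonneg
    exact (hPclosed.mem_iff_infDist_zero hPne).mpr h2
  -- glue: sSup argument
  intro t ht
  suffices hsuff : x t ∈ P from ⟨hsuff.1, hsuff.2⟩
  set A := {s : ℝ | s ∈ Icc 0 t ∧ ∀ u ∈ Icc 0 s, x u ∈ P} with hAdef
  have h0A : (0:ℝ) ∈ A := by
    refine ⟨⟨le_refl 0, ht⟩, fun u hu => ?_⟩
    have : u = 0 := le_antisymm hu.2 hu.1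
    rw [this]; exact hx0
  have hAne : A.Nonempty := ⟨0, h0A⟩
  have hbdd : BddAbove A := ⟨t, fun s hs => hs.1.2⟩
  set M := sSup A with hMdef
  have hM0 : 0 ≤ M := le_csSup hbdd h0A
  have hMt : M ≤ t := csSup_le hAne (fun s hs => hs.1.2)
  have hMP : ∀ u, 0 ≤ u → u < M → x u ∈ P := by
    intro u hu huM
    obtain ⟨s, hsA, hus⟩ := exists_lt_of_lt_csSup hAne huM
    exact hsA.2 u ⟨hu, le_of_lt hus⟩
  have hxM : x M ∈ P := by
    rcases eq_or_lt_of_le hM0 with h | h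
    · rw [← h]; exact hx0
    · have htendM : Tendsto x (𝓝[<] M) (𝓝 (x M)) :=
        (hxcont M hM0).tendsto.mono_left nhdsWithin_le_nhds
      apply hPclosed.mem_of_tendsto htendM
      have : Ioo (0:ℝ) M ∈ 𝓝[<] M := Ioo_mem_nhdsLT_of_mem ⟨h, le_refl M⟩
      filter_upwards [this] with u hu
      exact hMP u (le_of_lt hu.1) hu.2
  have hMA : M ∈ A := by
    refine ⟨⟨hM0, hMt⟩, fun u hu => ?_⟩
    rcases eq_or_lt_of_le hu.2 with h | h
    · rw [h]; exact hxM
    · exact hMP u hu.1 h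
  rcases eq_or_lt_of_le hMt with h | h
  · rw [← h]; exact hxM
  · exfalso
    obtain ⟨δ, hδ, hkey⟩ := key M hM0 hxM
    have hmem : min (M + δ) t ∈ A := by
      refine ⟨⟨le_min (by linarith) ht, min_le_right _ _⟩, fun u hu => ?_⟩
      rcases le_or_gt u M with h' | h'
      · exact hMA.2 u ⟨hu.1, h'⟩
      · exact hkey u ⟨le_of_lt h', le_trans hu.2 (min_le_left _ _)⟩
    have h1 : min (M+δ) t ≤ M := le_csSup hbdd hmem
    have h2 : M < min (M+δ) t := lt_min (by linarith) h
    linarith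
end

section
/- Let W ⊆ ℝ^q be compact, let V ⊆ ℝᵐ be a linear subspace, and let g : ℝᵐ × ℝ^q → ℝᵐ be continuous, locally Lipschitz in its first argument (locally uniformly in the second), and satisfy g(y, w) ∈ V for all y ∈ ℝᵐ and w ∈ W. Let y̲ ≤ ȳ in ℝᵐ. Suppose that for every index i ∈ {1,…,m} and every w ∈ W: (a) g_i(y, w) ≥ 0 for every y ∈ V ∩ [y̲, ȳ] with y_i = y̲_i, and (b) g_i(y, w) ≤ 0 for every y ∈ V ∩ [y̲, ȳ] with y_i = ȳ_i. Then V ∩ [y̲, ȳ] is W-robustly forward invariant: for every continuous w : [0,∞) → W and every differentiable y : [0,∞) → ℝᵐ with y′(t) = g(y(t), w(t)) for all t ≥ 0 and y(0) ∈ V ∩ [y̲, ȳ], one has y(t) ∈ V ∩ [y̲, ȳ] for all t ≥ 0. -/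
open Set Metric Filter
open scoped RealInnerProductSpace Topology NNReal

/-- Each sup-norm component is bounded by the Euclidean norm. -/
lemma aux_pi_le_eu {m : ℕ} (v : Fin m → ℝ) :
    ‖v‖ ≤ ‖(EuclideanSpace.equiv (Fin m) ℝ).symm v‖ := by
  rw [pi_norm_le_iff_of_nonneg (norm_nonneg _)]
  intro i
  rw [EuclideanSpace.norm_eq]
  simp only [EuclideanSpace.equiv, ContinuousLinearEquiv.symm_apply_apply,
    PiLp.coe_symm_continuousLinearEquiv, WithLp.ofLp_toLp]
  calc ‖v i‖ = Real.sqrt (‖v i‖ ^ 2) := (Real.sqrt_sq (norm_nonneg _)).symm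
    _ ≤ Real.sqrt (∑ j, ‖v j‖ ^ 2) :=
        Real.sqrt_le_sqrt (Finset.single_le_sum (fun j _ => sq_nonneg ‖v j‖)
          (Finset.mem_univ i))

/-- The Euclidean norm is bounded by `√m` times the sup norm. -/
lemma aux_eu_le_pi {m : ℕ} (v : Fin m → ℝ) :
    ‖(EuclideanSpace.equiv (Fin m) ℝ).symm v‖ ≤ Real.sqrt m * ‖v‖ := by
  rw [EuclideanSpace.norm_eq]
  simp only [EuclideanSpace.equiv, PiLp.coe_symm_continuousLinearEquiv, WithLp.ofLp_toLp]
  calc Real.sqrt (∑ j, ‖v j‖ ^ 2)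
      ≤ Real.sqrt (∑ _j : Fin m, ‖v‖ ^ 2) := by
        apply Real.sqrt_le_sqrt
        apply Finset.sum_le_sum
        intro j _
        exact pow_le_pow_left₀ (norm_nonneg _) (norm_le_pi_norm v j) 2
    _ = Real.sqrt ((m : ℝ) * ‖v‖ ^ 2) := by
        rw [Finset.sum_const, Finset.card_univ, Fintype.card_fin, nsmul_eq_mul]
    _ = Real.sqrt m * ‖v‖ := by
        rw [Real.sqrt_mul (Nat.cast_nonneg m), Real.sqrt_sq (norm_nonneg _)]

/-- A vector satisfying the sign conditions at active faces points into the box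
for some positive step. -/
lemma aux_tangent_dir {m : ℕ} (yl yu p v : Fin m → ℝ)
    (hl : yl ≤ p) (hu : p ≤ yu)
    (hlo : ∀ i, p i = yl i → 0 ≤ v i) (hhi : ∀ i, p i = yu i → v i ≤ 0) :
    ∃ s : ℝ, 0 < s ∧ yl ≤ p + s • v ∧ p + s • v ≤ yu := by
  classical
  set si : Fin m → ℝ := fun i =>
    if 0 < v i then (yu i - p i) / v i
    else if v i < 0 then (p i - yl i) / (-v i) else 1 with hsi
  have hsipos : ∀ i, 0 < si i := by
    intro i
    by_cases h1 : 0 < v i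
    · have hne : p i ≠ yu i := fun h => absurd (hhi i h) (not_le.2 h1)
      have : p i < yu i := lt_of_le_of_ne (hu i) hne
      simp only [hsi, if_pos h1]
      exact div_pos (by linarith) h1
    · by_cases h2 : v i < 0
      · have hne : p i ≠ yl i := fun h => absurd (hlo i h) (not_le.2 h2)
        have : yl i < p i := lt_of_le_of_ne (hl i) (Ne.symm hne)
        simp only [hsi, if_neg h1, if_pos h2]
        exact div_pos (by linarith) (by linarith)
      · simp only [hsi, if_neg h1, if_neg h2]; norm_num
  set F : Finset ℝ := insert 1 (Finset.image si Finset.univ) with hF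
  have hFne : F.Nonempty := ⟨1, Finset.mem_insert_self _ _⟩
  refine ⟨F.min' hFne, ?_, ?_, ?_⟩
  · have := F.min'_mem hFne
    rcases Finset.mem_insert.1 this with h | h
    · rw [h]; norm_num
    · obtain ⟨i, _, hi⟩ := Finset.mem_image.1 h
      rw [← hi]; exact hsipos i
  · intro i
    have hsle : F.min' hFne ≤ si i :=
      Finset.min'_le _ _ (Finset.mem_insert_of_mem (Finset.mem_image_of_mem _ (Finset.mem_univ i)))
    have hspos : 0 < F.min' hFne := by
      have := F.min'_mem hFne
      rcases Finset.mem_insert.1 this with h | h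
      · rw [h]; norm_num
      · obtain ⟨j, _, hj⟩ := Finset.mem_image.1 h
        rw [← hj]; exact hsipos j
    simp only [Pi.add_apply, Pi.smul_apply, smul_eq_mul]
    by_cases h1 : 0 < v i
    · nlinarith [hl i]
    · by_cases h2 : v i < 0
      · have hsile : si i = (p i - yl i) / (-v i) := by simp [hsi, h1, h2]
        have : F.min' hFne * (-v i) ≤ (p i - yl i) / (-v i) * (-v i) := by
          apply mul_le_mul_of_nonneg_right (hsle.trans_eq hsile) (by linarith)
        rw [div_mul_cancel₀ _ (by linarith : -v i ≠ 0)] at this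
        linarith
      · have : v i = 0 := le_antisymm (not_lt.1 h1) (not_lt.1 h2)
        rw [this]; simpa using hl i
  · intro i
    have hsle : F.min' hFne ≤ si i :=
      Finset.min'_le _ _ (Finset.mem_insert_of_mem (Finset.mem_image_of_mem _ (Finset.mem_univ i)))
    have hspos : 0 < F.min' hFne := by
      have := F.min'_mem hFne
      rcases Finset.mem_insert.1 this with h | h
      · rw [h]; norm_num
      · obtain ⟨j, _, hj⟩ := Finset.mem_image.1 h
        rw [← hj]; exact hsipos j
    simp only [Pi.add_apply, Pi.smul_apply, smul_eq_mul]
    by_cases h1 : 0 < v i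
    · have hsile : si i = (yu i - p i) / v i := by simp [hsi, h1]
      have : F.min' hFne * v i ≤ (yu i - p i) / v i * v i :=
        mul_le_mul_of_nonneg_right (hsle.trans_eq hsile) h1.le
      rw [div_mul_cancel₀ _ (ne_of_gt h1)] at this
      linarith
    · by_cases h2 : v i < 0
      · nlinarith [hu i]
      · have : v i = 0 := le_antisymm (not_lt.1 h1) (not_lt.1 h2)
        rw [this]; simpa using hu i

set_option maxHeartbeats 1000000 in
/-- Lifted-space invariance (proof of Theorem 1): if the vector field `g` always
takes values in a linear subspace `V`, and on the intersection of `V` with each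
lower (resp. upper) face of the hyperrectangle `[y̲, ȳ]` the `i`-th component of
`g` is nonnegative (resp. nonpositive) for every disturbance in the compact set
`W`, then `V ∩ [y̲, ȳ]` is `W`-robustly forward invariant for `ẏ = g(y, w)`. -/
theorem subspace_inter_box_robust_forward_invariant
    (m q : ℕ) (W : Set (Fin q → ℝ)) (hW : IsCompact W)
    (V : Submodule ℝ (Fin m → ℝ))
    (g : (Fin m → ℝ) → (Fin q → ℝ) → (Fin m → ℝ))
    (hgc : Continuous (Function.uncurry g))
    (hglip : ∀ (y₀ : Fin m → ℝ) (w₀ : Fin q → ℝ), ∃ ε > (0 : ℝ), ∃ K : NNReal,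
      ∀ w ∈ Metric.ball w₀ ε, LipschitzOnWith K (fun y => g y w) (Metric.ball y₀ ε))
    (hgV : ∀ (y : Fin m → ℝ), ∀ w ∈ W, g y w ∈ V)
    (yl yu : Fin m → ℝ) (hle : yl ≤ yu)
    (ha : ∀ i : Fin m, ∀ w ∈ W, ∀ y : Fin m → ℝ,
      y ∈ V → yl ≤ y → y ≤ yu → y i = yl i → 0 ≤ g y w i)
    (hb : ∀ i : Fin m, ∀ w ∈ W, ∀ y : Fin m → ℝ,
      y ∈ V → yl ≤ y → y ≤ yu → y i = yu i → g y w i ≤ 0)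
    (w : ℝ → Fin q → ℝ) (hwc : ContinuousOn w (Set.Ici (0 : ℝ)))
    (hwW : ∀ t : ℝ, 0 ≤ t → w t ∈ W)
    (y : ℝ → Fin m → ℝ)
    (hy : ∀ t : ℝ, 0 ≤ t → HasDerivAt y (g (y t) (w t)) t)
    (hy0 : y 0 ∈ V ∧ yl ≤ y 0 ∧ y 0 ≤ yu) :
    ∀ t : ℝ, 0 ≤ t → y t ∈ V ∧ yl ≤ y t ∧ y t ≤ yu := by
  classical
  obtain ⟨hy0V, hy0l, hy0u⟩ := hy0
  have hycont : ∀ t : ℝ, 0 ≤ t → ContinuousAt y t := fun t ht => (hy t ht).continuousAt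
  -- Step 1 : the solution stays in the subspace V
  have hyV : ∀ t : ℝ, 0 ≤ t → y t ∈ V := by
    obtain ⟨V', hV'⟩ := Submodule.exists_isCompl V
    set P : (Fin m → ℝ) →ₗ[ℝ] V := Submodule.linearProjOfIsCompl V V' hV' with hPdef
    set Q : (Fin m → ℝ) →ₗ[ℝ] (Fin m → ℝ) := LinearMap.id - V.subtype ∘ₗ P with hQdef
    have hQV : ∀ z ∈ V, Q z = 0 := by
      intro z hz
      have : P z = ⟨z, hz⟩ := Submodule.linearProjOfIsCompl_apply_left hV' ⟨z, hz⟩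
      simp [hQdef, this]
    have hQ0 : ∀ z : Fin m → ℝ, Q z = 0 → z ∈ V := by
      intro z hz
      have : z - (P z : Fin m → ℝ) = 0 := by simpa [hQdef] using hz
      have hz' : z = (P z : Fin m → ℝ) := by
        have := sub_eq_zero.1 this; exact this
      rw [hz']; exact (P z).2
    set Qc : (Fin m → ℝ) →L[ℝ] (Fin m → ℝ) := LinearMap.toContinuousLinearMap Q with hQcdef
    have hQc : ∀ z : Fin m → ℝ, Qc z = Q z := fun z => rfl
    intro t ht
    rcases eq_or_lt_of_le ht with rfl | ht'
    · exact hy0V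
    · have hconst : ∀ x ∈ Icc (0:ℝ) t, (fun s => Qc (y s)) x = (fun s => Qc (y s)) 0 := by
        apply constant_of_has_deriv_right_zero
        · intro s hs
          exact (Qc.continuous.continuousAt.comp (hycont s hs.1)).continuousWithinAt
        · intro s hs
          have hd : HasDerivAt (fun r => Qc (y r)) (Qc (g (y s) (w s))) s :=
            Qc.hasFDerivAt.comp_hasDerivAt s (hy s hs.1)
          have hz : Qc (g (y s) (w s)) = 0 := by
            rw [hQc]; exact hQV _ (hgV _ _ (hwW s hs.1))
          rw [hz] at hd
          exact hd.hasDerivWithinAt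
      have h0 : Qc (y t) = 0 := by
        have := hconst t ⟨ht, le_refl t⟩
        simp only at this
        rw [this, hQc]
        exact hQV _ hy0V
      exact hQ0 _ (by rw [← hQc]; exact h0)
  -- the intersection K of V and the box
  set Kset : Set (Fin m → ℝ) := (V : Set (Fin m → ℝ)) ∩ Icc yl yu with hKsetdef
  have hKmem : ∀ z : Fin m → ℝ, z ∈ Kset ↔ z ∈ V ∧ yl ≤ z ∧ z ≤ yu := by
    intro z; simp [hKsetdef, Set.mem_Icc, and_assoc]
  have hKconv : Convex ℝ Kset := V.convex.inter (convex_Icc yl yu)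
  have hKclosed : IsClosed Kset :=
    V.closed_of_finiteDimensional.inter isClosed_Icc
  -- tangency of g at points of K
  have htang : ∀ p ∈ Kset, ∀ ww ∈ W, ∃ s : ℝ, 0 < s ∧ p + s • g p ww ∈ Kset := by
    intro p hp ww hww
    obtain ⟨hpV, hpl, hpu⟩ := (hKmem p).1 hp
    obtain ⟨s, hs, h1, h2⟩ := aux_tangent_dir yl yu p (g p ww) hpl hpu
      (fun i hi => ha i ww hww p hpV hpl hpu hi)
      (fun i hi => hb i ww hww p hpV hpl hpu hi)
    exact ⟨s, hs, (hKmem _).2 ⟨V.add_mem hpV (V.smul_mem s (hgV p ww hww)), h1, h2⟩⟩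
  -- Euclidean structure
  set e : (Fin m → ℝ) ≃L[ℝ] EuclideanSpace ℝ (Fin m) :=
    (EuclideanSpace.equiv (Fin m) ℝ).symm with hedef
  set K' : Set (EuclideanSpace ℝ (Fin m)) := e '' Kset with hK'def
  have hK'conv : Convex ℝ K' := hKconv.linear_image (e : (Fin m → ℝ) →ₗ[ℝ] EuclideanSpace ℝ (Fin m))
  have hK'closed : IsClosed K' := e.toHomeomorph.isClosedMap _ hKclosed
  have hK'ne : K'.Nonempty := ⟨e (y 0), ⟨y 0, (hKmem _).2 ⟨hy0V, hy0l, hy0u⟩, rfl⟩⟩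
  have hpile : ∀ v : Fin m → ℝ, ‖v‖ ≤ ‖e v‖ := fun v => aux_pi_le_eu v
  have heule : ∀ v : Fin m → ℝ, ‖e v‖ ≤ Real.sqrt m * ‖v‖ := fun v => aux_eu_le_pi v
  have hdistle : ∀ a b : Fin m → ℝ, dist a b ≤ dist (e a) (e b) := by
    intro a b
    rw [dist_eq_norm, dist_eq_norm, ← map_sub]
    exact hpile _
  -- metric projection onto K'
  have proj : ∀ u : EuclideanSpace ℝ (Fin m), ∃ v ∈ K',
      ‖u - v‖ = infDist u K' ∧ ∀ z ∈ K', (inner ℝ (u - v) (z - v) : ℝ) ≤ 0 := by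
    intro u
    obtain ⟨v, hvK, hv⟩ := exists_norm_eq_iInf_of_complete_convex hK'ne
      hK'closed.isComplete hK'conv u
    refine ⟨v, hvK, ?_, (norm_eq_iInf_iff_real_inner_le_zero hK'conv hvK).1 hv⟩
    rw [Metric.infDist_eq_iInf, hv]
    simp [dist_eq_norm]
  -- Step 2 : the solution stays in K
  have key : ∀ t : ℝ, 0 ≤ t → y t ∈ Kset := by
    by_contra hcon
    push_neg at hcon
    obtain ⟨t₀, ht₀, hyt₀⟩ := hcon
    set A : Set ℝ := {t | 0 ≤ t ∧ ∀ s ∈ Icc (0:ℝ) t, y s ∈ Kset} with hAdef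
    have hA0 : (0:ℝ) ∈ A := by
      refine ⟨le_refl _, fun s hs => ?_⟩
      have hs0 : s = 0 := le_antisymm hs.2 hs.1
      rw [hs0]; exact (hKmem _).2 ⟨hy0V, hy0l, hy0u⟩
    have hAbdd : BddAbove A := by
      refine ⟨t₀, fun t htA => ?_⟩
      by_contra hlt
      push_neg at hlt
      exact hyt₀ (htA.2 t₀ ⟨ht₀, hlt.le⟩)
    set τ := sSup A with hτdef
    have hτ0 : 0 ≤ τ := le_csSup hAbdd hA0
    have hτlt : ∀ s : ℝ, 0 ≤ s → s < τ → y s ∈ Kset := by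
      intro s hs0 hsτ
      obtain ⟨t', ht'A, hst'⟩ := exists_lt_of_lt_csSup ⟨0, hA0⟩ hsτ
      exact ht'A.2 s ⟨hs0, hst'.le⟩
    have hτK : y τ ∈ Kset := by
      rcases eq_or_lt_of_le hτ0 with h | h
      · rw [← h]; exact (hKmem _).2 ⟨hy0V, hy0l, hy0u⟩
      · have htd : Tendsto y (𝓝[<] τ) (𝓝 (y τ)) := (hycont τ hτ0).continuousWithinAt
        refine hKclosed.mem_of_tendsto htd ?_
        filter_upwards [Ioo_mem_nhdsLT_of_mem (⟨h, le_refl τ⟩ : τ ∈ Ioc (0:ℝ) τ)] with s hs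
        exact hτlt s hs.1.le hs.2
    obtain ⟨ε, hε, L, hLip⟩ := hglip (y τ) (w τ)
    have hev : ∀ᶠ t in 𝓝[≥] τ,
        w t ∈ ball (w τ) ε ∧ dist (e (y t)) (e (y τ)) < ε / 4 := by
      have h1 : ∀ᶠ t in 𝓝[≥] τ, w t ∈ ball (w τ) ε := by
        have hcw : Tendsto w (𝓝[Ici 0] τ) (𝓝 (w τ)) := hwc τ hτ0
        have hmem := hcw (ball_mem_nhds (w τ) hε)
        exact Filter.le_def.1 (nhdsWithin_mono τ (Ici_subset_Ici.2 hτ0)) _ hmem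
      have h2 : ∀ᶠ t in 𝓝[≥] τ, dist (e (y t)) (e (y τ)) < ε / 4 := by
        have hce : ContinuousAt (fun t => e (y t)) τ :=
          e.continuous.continuousAt.comp (hycont τ hτ0)
        have := hce (ball_mem_nhds (e (y τ)) (by linarith : (0:ℝ) < ε / 4))
        exact eventually_nhdsWithin_of_eventually_nhds this
      exact h1.and h2
    obtain ⟨b, hbτ, hIcc⟩ := mem_nhdsGE_iff_exists_Icc_subset.1 hev
    set f : ℝ → ℝ := fun t => infDist (e (y t)) K' with hfdef
    have hfK : ∀ t : ℝ, (y t ∈ Kset ↔ f t = 0) := by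
      intro t
      constructor
      · intro h; exact infDist_zero_of_mem ⟨y t, h, rfl⟩
      · intro h
        have hm : e (y t) ∈ K' := (hK'closed.mem_iff_infDist_zero hK'ne).2 h
        obtain ⟨z, hz, hez⟩ := hm
        rwa [← e.injective hez]
    set L' : ℝ := Real.sqrt m * L with hL'def
    have hL'0 : 0 ≤ L' := mul_nonneg (Real.sqrt_nonneg _) L.coe_nonneg
    have hfc : ContinuousOn f (Icc τ b) := by
      intro t htb
      exact ((Metric.continuous_infDist_pt K').continuousAt.comp
        (e.continuous.continuousAt.comp (hycont t (hτ0.trans htb.1)))).continuousWithinAt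
    have hfτ : f τ = 0 := (hfK τ).1 hτK
    have hf' : ∀ x ∈ Ico τ b, ∀ r : ℝ, L' * f x < r →
        ∃ᶠ z in 𝓝[>] x, (z - x)⁻¹ * (f z - f x) < r := by
      intro x hx r hr
      have hx0 : 0 ≤ x := hτ0.trans hx.1
      have hxmem := hIcc ⟨hx.1, hx.2.le⟩
      have hxw : w x ∈ ball (w τ) ε := hxmem.1
      have hxy : dist (e (y x)) (e (y τ)) < ε / 4 := hxmem.2
      set gx : Fin m → ℝ := g (y x) (w x) with hgxdef
      have hDey : HasDerivAt (fun t => e (y t)) (e gx) x :=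
        (e : (Fin m → ℝ) →L[ℝ] EuclideanSpace ℝ (Fin m)).hasFDerivAt.comp_hasDerivAt
          x (hy x hx0)
      by_cases hyxK : y x ∈ Kset
      · -- the point is in K : use the tangent direction
        have hfx0 : f x = 0 := (hfK x).1 hyxK
        have hr0 : 0 < r := by rw [hfx0, mul_zero] at hr; exact hr
        obtain ⟨s, hs, hsK⟩ := htang (y x) hyxK (w x) (hwW x hx0)
        have hslope : Tendsto (fun z => (z - x)⁻¹ • (e (y z) - e (y x)))
            (𝓝[>] x) (𝓝 (e gx)) := by
          have hts := hasDerivAt_iff_tendsto_slope.1 hDey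
          have hmono : 𝓝[>] x ≤ 𝓝[≠] x :=
            nhdsWithin_mono x (fun z hz => ne_of_gt hz)
          have := hts.mono_left hmono
          exact this
        have hsmall : ∀ᶠ z in 𝓝[>] x,
            ‖(z - x)⁻¹ • (e (y z) - e (y x)) - e gx‖ < r := by
          have := hslope (ball_mem_nhds (e gx) hr0)
          filter_upwards [this] with z hz
          rwa [Set.mem_preimage, mem_ball, dist_eq_norm] at hz
        have hmemIoo : Ioo x (x + s) ∈ 𝓝[>] x :=
          Ioo_mem_nhdsGT_of_mem (Set.mem_Ico.2 ⟨le_refl x, by linarith⟩)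
        refine Eventually.frequently ?_
        filter_upwards [hsmall, hmemIoo] with z hz1 hz2
        have hzx : 0 < z - x := sub_pos.2 hz2.1
        have hmem : y x + (z - x) • gx ∈ Kset := by
          have ht01 : (z - x) / s ∈ Icc (0:ℝ) 1 :=
            ⟨div_nonneg hzx.le hs.le, (div_le_one hs).2 (by linarith [hz2.2])⟩
          have hcv := hKconv.add_smul_mem hyxK (by exact hsK) ht01
          rwa [smul_smul, div_mul_cancel₀ _ (ne_of_gt hs)] at hcv
        have hfz : f z ≤ ‖e (y z) - e (y x + (z - x) • gx)‖ := by
          have hmemK' : e (y x + (z - x) • gx) ∈ K' := Set.mem_image_of_mem _ hmem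
          have := infDist_le_dist_of_mem (x := e (y z)) hmemK'
          rwa [dist_eq_norm] at this
        have heq1 : e (y z) - e (y x + (z - x) • gx)
            = e (y z) - e (y x) - (z - x) • e gx := by
          rw [map_add, map_smul]; abel
        have heq2 : (z - x)⁻¹ • (e (y z) - e (y x) - (z - x) • e gx)
            = (z - x)⁻¹ • (e (y z) - e (y x)) - e gx := by
          rw [smul_sub, smul_smul, inv_mul_cancel₀ (ne_of_gt hzx), one_smul]
        calc (z - x)⁻¹ * (f z - f x) = (z - x)⁻¹ * f z := by rw [hfx0, sub_zero]
          _ ≤ (z - x)⁻¹ * ‖e (y z) - e (y x) - (z - x) • e gx‖ := by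
              apply mul_le_mul_of_nonneg_left _ (inv_nonneg.2 hzx.le)
              rw [← heq1]; exact hfz
          _ = ‖(z - x)⁻¹ • (e (y z) - e (y x)) - e gx‖ := by
              rw [← heq2, norm_smul, Real.norm_eq_abs,
                abs_of_nonneg (inv_nonneg.2 hzx.le)]
          _ < r := hz1
      · -- the point is not in K : use the projection
        obtain ⟨p, hpK', hpdist, hpchar⟩ := proj (e (y x))
        have hfx : f x = ‖e (y x) - p‖ := hpdist.symm
        set pt : Fin m → ℝ := e.symm p with hptdef
        have hept : e pt = p := e.apply_symm_apply p
        have hptK : pt ∈ Kset := by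
          obtain ⟨z, hz, hez⟩ := hpK'
          have hzpt : z = pt := by rw [hptdef, ← hez, e.symm_apply_apply]
          rwa [← hzpt]
        have hune : e (y x) ≠ p := by
          intro h
          apply hyxK
          have hmm : e (y x) ∈ K' := by rw [h]; exact hpK'
          obtain ⟨z, hz, hez⟩ := hmm
          rwa [← e.injective hez]
        have hfxpos : 0 < f x := by
          rw [hfx]; exact norm_pos_iff.2 (sub_ne_zero.2 hune)
        -- inner product of the outward direction with g at the projection
        have hinner0 : (inner ℝ (e (y x) - p) (e (g pt (w x))) : ℝ) ≤ 0 := by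
          obtain ⟨s, hs, hsK⟩ := htang pt hptK (w x) (hwW x hx0)
          have hz' : e (pt + s • g pt (w x)) ∈ K' := ⟨_, hsK, rfl⟩
          have hch := hpchar _ hz'
          have heq : e (pt + s • g pt (w x)) - p = s • e (g pt (w x)) := by
            rw [map_add, map_smul, hept]; abel
          rw [heq, real_inner_smul_right] at hch
          nlinarith
        -- Lipschitz estimate between y x and pt
        have hdyx : dist (y x) (y τ) < ε / 4 := lt_of_le_of_lt (hdistle _ _) hxy
        have hfxle : f x ≤ dist (e (y x)) (e (y τ)) :=
          infDist_le_dist_of_mem ⟨y τ, hτK, rfl⟩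
        have hdpeyτ : dist p (e (y τ)) < ε / 2 := by
          have h1 : dist p (e (y τ)) ≤ dist p (e (y x)) + dist (e (y x)) (e (y τ)) :=
            dist_triangle _ _ _
          have h2 : dist p (e (y x)) = f x := by
            rw [dist_comm, dist_eq_norm, ← hfx]
          linarith
        have hdpt : dist pt (y τ) < ε / 2 := by
          have := hdistle pt (y τ)
          rw [hept] at this
          linarith
        have hyxball : y x ∈ ball (y τ) ε := mem_ball.2 (by linarith)
        have hptball : pt ∈ ball (y τ) ε := mem_ball.2 (by linarith)
        have hgdist : dist (g (y x) (w x)) (g pt (w x)) ≤ (L : ℝ) * dist (y x) pt :=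
          (hLip (w x) hxw).dist_le_mul _ hyxball _ hptball
        have hgE : ‖e gx - e (g pt (w x))‖ ≤ L' * ‖e (y x) - p‖ := by
          rw [← map_sub]
          calc ‖e (gx - g pt (w x))‖
              ≤ Real.sqrt m * ‖gx - g pt (w x)‖ := heule _
            _ ≤ Real.sqrt m * ((L : ℝ) * ‖y x - pt‖) := by
                apply mul_le_mul_of_nonneg_left _ (Real.sqrt_nonneg _)
                rw [← dist_eq_norm, ← dist_eq_norm]
                exact hgdist
            _ = L' * ‖y x - pt‖ := by rw [hL'def]; ring
            _ ≤ L' * ‖e (y x) - p‖ := by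
                apply mul_le_mul_of_nonneg_left _ hL'0
                calc ‖y x - pt‖ ≤ ‖e (y x - pt)‖ := hpile _
                  _ = ‖e (y x) - p‖ := by rw [map_sub, hept]
        -- the distance to p is differentiable with small derivative
        set u : ℝ → EuclideanSpace ℝ (Fin m) := fun z => e (y z) - p with hudef
        have hux : u x = e (y x) - p := rfl
        have hDu : HasDerivAt u (e gx) x := hDey.sub_const p
        have hDin : HasDerivAt (fun z => (inner ℝ (u z) (u z) : ℝ))
            ((inner ℝ (u x) (e gx) : ℝ) + (inner ℝ (e gx) (u x) : ℝ)) x :=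
          HasDerivAt.inner ℝ hDu hDu
        have hinnx : (inner ℝ (u x) (u x) : ℝ) ≠ 0 := by
          rw [real_inner_self_eq_norm_mul_norm, hux, ← hfx]
          positivity
        have hψ : HasDerivAt (fun z => Real.sqrt (inner ℝ (u z) (u z) : ℝ))
            (1 / (2 * Real.sqrt (inner ℝ (u x) (u x) : ℝ)) *
              ((inner ℝ (u x) (e gx) : ℝ) + (inner ℝ (e gx) (u x) : ℝ))) x :=
          (Real.hasDerivAt_sqrt hinnx).comp x hDin
        have hnormu : ∀ z, Real.sqrt (inner ℝ (u z) (u z) : ℝ) = ‖u z‖ := by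
          intro z
          rw [real_inner_self_eq_norm_mul_norm, Real.sqrt_mul_self (norm_nonneg _)]
        have hinnle : (inner ℝ (u x) (e gx) : ℝ) ≤ L' * (f x * f x) := by
          have hsplit : (inner ℝ (u x) (e gx) : ℝ)
              = (inner ℝ (u x) (e gx - e (g pt (w x))) : ℝ)
                + (inner ℝ (u x) (e (g pt (w x))) : ℝ) := by
            rw [inner_sub_right]; ring
          have h1 : (inner ℝ (u x) (e gx - e (g pt (w x))) : ℝ)
              ≤ ‖u x‖ * ‖e gx - e (g pt (w x))‖ := real_inner_le_norm _ _
          have h2 : ‖u x‖ * ‖e gx - e (g pt (w x))‖ ≤ ‖u x‖ * (L' * ‖e (y x) - p‖) :=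
            mul_le_mul_of_nonneg_left hgE (norm_nonneg _)
          have h3 : (inner ℝ (u x) (e (g pt (w x))) : ℝ) ≤ 0 := by
            rw [hux]; exact hinner0
          have h4 : ‖u x‖ = f x := by rw [hux, ← hfx]
          rw [hsplit]
          calc (inner ℝ (u x) (e gx - e (g pt (w x))) : ℝ)
                + (inner ℝ (u x) (e (g pt (w x))) : ℝ)
              ≤ ‖u x‖ * (L' * ‖e (y x) - p‖) + 0 := add_le_add (h1.trans h2) h3
            _ = L' * (f x * f x) := by rw [add_zero, h4]; ring
        have hd : 1 / (2 * Real.sqrt (inner ℝ (u x) (u x) : ℝ)) *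
            ((inner ℝ (u x) (e gx) : ℝ) + (inner ℝ (e gx) (u x) : ℝ)) < r := by
          rw [hnormu]
          have h2 : (inner ℝ (u x) (e gx) : ℝ) + (inner ℝ (e gx) (u x) : ℝ)
              = 2 * (inner ℝ (u x) (e gx) : ℝ) := by
            rw [real_inner_comm (e gx) (u x)]; ring
          rw [h2]
          have h4 : ‖u x‖ = f x := by rw [hux, ← hfx]
          rw [h4]
          rw [div_mul_eq_mul_div, one_mul, div_lt_iff₀ (by positivity)]
          nlinarith
        have hts := hasDerivAt_iff_tendsto_slope.1 hψ
        have hev2 : ∀ᶠ z in 𝓝[>] x,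
            (z - x)⁻¹ * (Real.sqrt (inner ℝ (u z) (u z) : ℝ)
              - Real.sqrt (inner ℝ (u x) (u x) : ℝ)) < r := by
          have hmono : 𝓝[>] x ≤ 𝓝[≠] x :=
            nhdsWithin_mono x (fun z hz => ne_of_gt hz)
          have := (hts.mono_left hmono) (Iio_mem_nhds hd)
          filter_upwards [this] with z hz
          exact hz
        refine Eventually.frequently ?_
        filter_upwards [hev2, self_mem_nhdsWithin] with z hz1 hz2
        have hzx : 0 < z - x := sub_pos.2 hz2
        have hfzle : f z ≤ ‖u z‖ :=
          le_trans (infDist_le_dist_of_mem hpK') (le_of_eq (dist_eq_norm _ _))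
        have hfxeq : f x = ‖u x‖ := by rw [hux, hfx]
        calc (z - x)⁻¹ * (f z - f x)
            ≤ (z - x)⁻¹ * (‖u z‖ - ‖u x‖) := by
              apply mul_le_mul_of_nonneg_left _ (inv_nonneg.2 hzx.le)
              rw [hfxeq] at *
              linarith
          _ = (z - x)⁻¹ * (Real.sqrt (inner ℝ (u z) (u z) : ℝ)
              - Real.sqrt (inner ℝ (u x) (u x) : ℝ)) := by rw [hnormu, hnormu]
          _ < r := hz1
    have hgron := le_gronwallBound_of_liminf_deriv_right_le
      (f := f) (f' := fun x => L' * f x) (δ := 0) (K := L') (ε := 0)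
      hfc hf' hfτ.le (fun x _ => (add_zero (L' * f x)).symm.le)
    have hf0 : ∀ x ∈ Icc τ b, f x = 0 := by
      intro x hx
      have hg1 := hgron x hx
      rw [gronwallBound_ε0_δ0] at hg1
      exact le_antisymm hg1 infDist_nonneg
    have hbA : b ∈ A := by
      refine ⟨hτ0.trans hbτ.le, fun s hs => ?_⟩
      rcases lt_or_ge s τ with h | h
      · exact hτlt s hs.1 h
      · exact (hfK s).2 (hf0 s ⟨h, hs.2⟩)
    exact absurd (le_csSup hAbdd hbA) (not_le.2 hbτ)
  intro t ht
  exact (hKmem _).1 (key t ht)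
end
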